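/- For every positive integer n there exist constants 0 < c ≤ C such that for every v ∈ ℝⁿ and every unit vector ν ∈ S^{n−1}: c · min(|v|, 1) ≤ ∫_{S^{n−1}} min(|v·ξ|, 1) · |ν·ξ| dH^{n−1}(ξ) ≤ C · min(|v|, 1). -/

import Mathlib

/-!
Let `n` be the dimension and `σ` the normalized surface measure, a rotation-invariant probability
measure on the sphere; it exists because `H^{n-1}(S^{n-1})` is positive and finite, which follows
by comparing with Lebesgue measure on `ℝ^{n-1}` through Lipschitz maps (a coordinate projection of
the sphere onto a disc, and radial projections of the faces of a cube onto the sphere).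

The upper bound is pointwise. For the lower bound write `v = |v| e` with `|e| = 1`; on the sphere
`min (|v|, 1) |e·ξ| ≤ min (|v·ξ|, 1)` and `|e·ξ| |ν·ξ| ≥ (e·ξ)² (ν·ξ)²`, so it suffices to bound
`∫ (e·ξ)² (ν·ξ)² dσ` from below uniformly in the unit vectors `e, ν`. Rotation invariance gives
`∫ (u·ξ)² dσ = |u|²/n` (sum over an orthonormal basis) and kills odd terms. Writing `ν = t e + w`
with `w ⊥ e`, the integral is `t² ∫ (e·ξ)⁴ + ∫ (e·ξ)² (w·ξ)²`. The first term is at least `t²/n²`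
by Jensen. For the second, a rotation by `π/4` in the plane of `e` and `w` gives
`8 |w|² ∫ (e·ξ)² (w·ξ)² = ∫ (|w|² (e·ξ)² + (w·ξ)²)²`, which by Jensen is at least `4 |w|⁴/n²`.
Since `t² + |w|² = 1`, the integral is at least `1/(2n²)`.
-/

open MeasureTheory ProbabilityTheory Metric NormedSpace
open scoped RealInnerProductSpace

theorem abs_real_inner_le_norm_of_norm_eq_one {E : Type*} [NormedAddCommGroup E]
    [InnerProductSpace ℝ E] {u ξ : E} (hξ : ‖ξ‖ = 1) : |⟪u, ξ⟫| ≤ ‖u‖ :=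
  (abs_real_inner_le_norm u ξ).trans_eq (by rw [hξ, mul_one])

theorem InnerProductSpace.exists_linearIsometryEquiv_map_pair {E : Type*} [NormedAddCommGroup E]
    [InnerProductSpace ℝ E] {p q p' q' : E} (hp : ‖p‖ = ‖p'‖) (hq : ‖q‖ = ‖q'‖)
    (hpq : ⟪p, q⟫ = ⟪p', q'⟫) : ∃ R : E ≃ₗᵢ[ℝ] E, R p = p' ∧ R q = q' := by
  set R₁ := (ℝ ∙ (p - p'))ᗮ.reflection
  have hR₁ : R₁ p = p' := Submodule.reflection_sub hp
  set R₂ := (ℝ ∙ (R₁ q - q'))ᗮ.reflection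
  have hR₂ : R₂ (R₁ q) = q' := Submodule.reflection_sub (by rw [R₁.norm_map, hq])
  have hp' : R₂ p' = p' := by
    refine Submodule.reflection_mem_subspace_eq_self ?_
    rw [Submodule.mem_orthogonal_singleton_iff_inner_right, inner_sub_left, ← hR₁,
      R₁.inner_map_map, real_inner_comm, hpq, hR₁, real_inner_comm, sub_self]
  exact ⟨R₁.trans R₂, by simp [hR₁, hp'], by simp [hR₂]⟩

theorem NormedSpace.lipschitzOnWith_normalize {V : Type*} [NormedAddCommGroup V]
    [NormedSpace ℝ V] : LipschitzOnWith 2 (normalize : V → V) {x | 1 ≤ ‖x‖} := by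
  refine LipschitzOnWith.of_dist_le_mul fun x (hx : 1 ≤ ‖x‖) y (hy : 1 ≤ ‖y‖) => ?_
  have hx0 : ‖x‖ ≠ 0 := (one_pos.trans_le hx).ne'
  have hy0 : ‖y‖ ≠ 0 := (one_pos.trans_le hy).ne'
  have key : normalize x - normalize y = ‖x‖⁻¹ • ((x - y) + (‖y‖ - ‖x‖) • normalize y) := by
    simp only [normalize, smul_add, smul_sub, smul_smul]
    match_scalars
    · field_simp
    · field_simp
      ring
  rw [dist_eq_norm, dist_eq_norm, key, norm_smul, norm_inv, norm_norm, NNReal.coe_ofNat]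
  calc ‖x‖⁻¹ * ‖x - y + (‖y‖ - ‖x‖) • normalize y‖ ≤ 1 * (‖x - y‖ + ‖x - y‖) := by
        gcongr
        · exact inv_le_one_of_one_le₀ hx
        · refine (norm_add_le _ _).trans (add_le_add le_rfl ?_)
          rw [norm_smul, norm_normalize (by rintro rfl; simp at hy0), mul_one, Real.norm_eq_abs]
          exact (abs_norm_sub_norm_le y x).trans_eq (norm_sub_rev y x)
    _ = 2 * ‖x - y‖ := by ring

theorem sq_integral_le_integral_sq {Ω : Type*} [MeasurableSpace Ω] {μ : Measure Ω}
    [IsProbabilityMeasure μ] {f : Ω → ℝ} (hf : MemLp f 2 μ) :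
    (∫ ξ, f ξ ∂μ) ^ 2 ≤ ∫ ξ, f ξ ^ 2 ∂μ := by
  have := variance_nonneg f μ
  rw [variance_eq_sub hf] at this
  simpa using this

section RotationInvariant

variable {E : Type*} [NormedAddCommGroup E] [InnerProductSpace ℝ E] [MeasurableSpace E]
  {μ : Measure E}

theorem finrank_pos_of_ae_norm_eq_one [FiniteDimensional ℝ E] [NeZero μ]
    (hμ : ∀ᵐ ξ ∂μ, ‖ξ‖ = 1) : 0 < Module.finrank ℝ E := by
  obtain ⟨ξ, hξ⟩ := hμ.exists
  have : Nontrivial E := ⟨ξ, 0, by rintro rfl; simp at hξ⟩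
  exact Module.finrank_pos

variable [BorelSpace E]

theorem integral_comp_inner_pair_eq (hrot : ∀ R : E ≃ₗᵢ[ℝ] E, MeasurePreserving R μ μ)
    {p q p' q' : E} (hp : ‖p‖ = ‖p'‖) (hq : ‖q‖ = ‖q'‖) (hpq : ⟪p, q⟫ = ⟪p', q'⟫)
    (F : ℝ → ℝ → ℝ) : ∫ ξ, F ⟪p, ξ⟫ ⟪q, ξ⟫ ∂μ = ∫ ξ, F ⟪p', ξ⟫ ⟪q', ξ⟫ ∂μ := by
  obtain ⟨R, rfl, rfl⟩ := InnerProductSpace.exists_linearIsometryEquiv_map_pair hp hq hpq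
  have h := (hrot R).integral_comp R.toHomeomorph.measurableEmbedding
    fun ξ => F ⟪R p, ξ⟫ ⟪R q, ξ⟫
  simpa only [LinearIsometryEquiv.inner_map_map] using h

theorem integral_comp_inner_eq_of_norm_eq (hrot : ∀ R : E ≃ₗᵢ[ℝ] E, MeasurePreserving R μ μ)
    {u w : E} (h : ‖u‖ = ‖w‖) (g : ℝ → ℝ) : ∫ ξ, g ⟪u, ξ⟫ ∂μ = ∫ ξ, g ⟪w, ξ⟫ ∂μ :=
  integral_comp_inner_pair_eq hrot h (q := 0) (q' := 0) rfl (by simp) (fun s _ => g s)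

theorem integral_comp_inner_mul_inner_eq_zero
    (hrot : ∀ R : E ≃ₗᵢ[ℝ] E, MeasurePreserving R μ μ) {e f : E} (hef : ⟪e, f⟫ = 0)
    (g : ℝ → ℝ) : ∫ ξ, g ⟪e, ξ⟫ * ⟪f, ξ⟫ ∂μ = 0 := by
  have h := integral_comp_inner_pair_eq hrot rfl (norm_neg f).symm
    (by rw [inner_neg_right, hef, neg_zero]) (fun s t => g s * t)
  simp only [inner_neg_left, mul_neg, integral_neg] at h
  linarith

theorem integral_inner_sq_sub_inner_sq_sq (hrot : ∀ R : E ≃ₗᵢ[ℝ] E, MeasurePreserving R μ μ)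
    {p q : E} (hnorm : ‖p‖ = ‖q‖) (hpq : ⟪p, q⟫ = 0) :
    ∫ ξ, (⟪p, ξ⟫ ^ 2 - ⟪q, ξ⟫ ^ 2) ^ 2 ∂μ = 4 * ∫ ξ, ⟪p, ξ⟫ ^ 2 * ⟪q, ξ⟫ ^ 2 ∂μ := by
  have hs : √2 ^ 2 = 2 := Real.sq_sqrt zero_le_two
  have hsq : ∀ x y : E, ‖x‖ ^ 2 = 2 * ‖y‖ ^ 2 → ‖x‖ = ‖√2 • y‖ := fun x y h => by
    rw [← pow_left_inj₀ (norm_nonneg _) (norm_nonneg _) two_ne_zero, h, norm_smul, mul_pow,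
      Real.norm_eq_abs, sq_abs, hs]
  -- A rotation maps `(p + q, p - q)` to `(√2 p, √2 q)`: the two pairs have the same Gram matrix.
  have h := integral_comp_inner_pair_eq hrot (p := p + q) (q := p - q) (p' := √2 • p)
    (q' := √2 • q) (hsq _ _ (by rw [norm_add_sq_real, hpq, hnorm]; ring))
    (hsq _ _ (by rw [norm_sub_sq_real, hpq, hnorm]; ring))
    (by rw [(real_inner_add_sub_eq_zero_iff p q).2 hnorm, real_inner_smul_left,
      real_inner_smul_right, hpq, mul_zero, mul_zero]) (fun s t => (s * t) ^ 2)
  simp only [inner_add_left, inner_sub_left, real_inner_smul_left] at h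
  rw [← integral_const_mul]
  calc ∫ ξ, (⟪p, ξ⟫ ^ 2 - ⟪q, ξ⟫ ^ 2) ^ 2 ∂μ
      = ∫ ξ, ((⟪p, ξ⟫ + ⟪q, ξ⟫) * (⟪p, ξ⟫ - ⟪q, ξ⟫)) ^ 2 ∂μ := by congr 1; funext ξ; ring
    _ = ∫ ξ, (√2 * ⟪p, ξ⟫ * (√2 * ⟪q, ξ⟫)) ^ 2 ∂μ := h
    _ = ∫ ξ, 4 * (⟪p, ξ⟫ ^ 2 * ⟪q, ξ⟫ ^ 2) ∂μ := by
      congr 1; funext ξ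
      rw [show (√2 * ⟪p, ξ⟫ * (√2 * ⟪q, ξ⟫)) ^ 2 = (√2 ^ 2) ^ 2 * (⟪p, ξ⟫ ^ 2 * ⟪q, ξ⟫ ^ 2) by
        ring, hs]
      ring

variable [FiniteDimensional ℝ E]

theorem memLp_of_continuous_of_ae_norm_eq_one [IsFiniteMeasure μ] (hμ : ∀ᵐ ξ ∂μ, ‖ξ‖ = 1)
    {f : E → ℝ} (hf : Continuous f) (p : ENNReal) : MemLp f p μ := by
  obtain ⟨C, hC⟩ := (isCompact_sphere (0 : E) 1).exists_bound_of_continuousOn hf.continuousOn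
  exact MemLp.of_bound hf.aestronglyMeasurable C <|
    hμ.mono fun ξ hξ => hC ξ (mem_sphere_zero_iff_norm.2 hξ)

theorem integrable_of_continuous_of_ae_norm_eq_one [IsFiniteMeasure μ] (hμ : ∀ᵐ ξ ∂μ, ‖ξ‖ = 1)
    {f : E → ℝ} (hf : Continuous f) : Integrable f μ :=
  memLp_one_iff_integrable.1 (memLp_of_continuous_of_ae_norm_eq_one hμ hf 1)

theorem integral_inner_sq [IsProbabilityMeasure μ] (hμ : ∀ᵐ ξ ∂μ, ‖ξ‖ = 1)
    (hrot : ∀ R : E ≃ₗᵢ[ℝ] E, MeasurePreserving R μ μ) (u : E) :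
    ∫ ξ, ⟪u, ξ⟫ ^ 2 ∂μ = ‖u‖ ^ 2 / Module.finrank ℝ E := by
  set b := stdOrthonormalBasis ℝ E
  have hb : ∀ i, ∫ ξ, ⟪u, ξ⟫ ^ 2 ∂μ = ‖u‖ ^ 2 * ∫ ξ, ⟪b i, ξ⟫ ^ 2 ∂μ := fun i => by
    rw [integral_comp_inner_eq_of_norm_eq hrot (w := ‖u‖ • b i)
      (by rw [norm_smul, norm_norm, b.orthonormal.1 i, mul_one]) (· ^ 2),
      ← integral_const_mul]
    simp [real_inner_smul_left, mul_pow]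
  have hsum : ∑ i, ∫ ξ, ⟪b i, ξ⟫ ^ 2 ∂μ = 1 := by
    calc ∑ i, ∫ ξ, ⟪b i, ξ⟫ ^ 2 ∂μ = ∫ ξ, ∑ i, ⟪b i, ξ⟫ ^ 2 ∂μ :=
          (integral_finsetSum _ fun i _ => integrable_of_continuous_of_ae_norm_eq_one hμ
            (f := fun ξ => ⟪b i, ξ⟫ ^ 2) (by fun_prop)).symm
      _ = ∫ _, (1 : ℝ) ∂μ :=
          integral_congr_ae (hμ.mono fun ξ hξ => by simp [b.sum_sq_inner_right, hξ])
      _ = 1 := by simp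
  rw [eq_div_iff (Nat.cast_ne_zero.2 (finrank_pos_of_ae_norm_eq_one hμ).ne')]
  calc _ = ∑ _i : Fin (Module.finrank ℝ E), ∫ ξ, ⟪u, ξ⟫ ^ 2 ∂μ := by simp [mul_comm]
    _ = ‖u‖ ^ 2 := by rw [Finset.sum_congr rfl fun i _ => hb i, ← Finset.mul_sum, hsum, mul_one]

theorem div_le_integral_inner_sq_mul_inner_sq_of_inner_eq_zero [IsProbabilityMeasure μ]
    (hμ : ∀ᵐ ξ ∂μ, ‖ξ‖ = 1) (hrot : ∀ R : E ≃ₗᵢ[ℝ] E, MeasurePreserving R μ μ)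
    {p q : E} (hp : ‖p‖ = 1) (hpq : ⟪p, q⟫ = 0) :
    ‖q‖ ^ 2 / (2 * Module.finrank ℝ E ^ 2) ≤ ∫ ξ, ⟪p, ξ⟫ ^ 2 * ⟪q, ξ⟫ ^ 2 ∂μ := by
  set n : ℝ := (Module.finrank ℝ E : ℝ)
  set k := ‖q‖ ^ 2
  set P := ∫ ξ, ⟪p, ξ⟫ ^ 2 * ⟪q, ξ⟫ ^ 2 ∂μ
  have hint : ∀ f : E → ℝ, Continuous f → Integrable f μ :=
    fun f hf => integrable_of_continuous_of_ae_norm_eq_one hμ hf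
  have h45 : ∫ ξ, (k * ⟪p, ξ⟫ ^ 2 - ⟪q, ξ⟫ ^ 2) ^ 2 ∂μ = 4 * k * P := by
    have h := integral_inner_sq_sub_inner_sq_sq hrot (p := ‖q‖ • p) (q := q)
      (by rw [norm_smul, norm_norm, hp, mul_one]) (by rw [real_inner_smul_left, hpq, mul_zero])
    simp only [real_inner_smul_left, mul_pow, mul_assoc, integral_const_mul] at h
    rw [h, mul_assoc]
  have hsq : ∫ ξ, (k * ⟪p, ξ⟫ ^ 2 + ⟪q, ξ⟫ ^ 2) ^ 2 ∂μ = 8 * k * P := by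
    calc _ = ∫ ξ, ((k * ⟪p, ξ⟫ ^ 2 - ⟪q, ξ⟫ ^ 2) ^ 2 + 4 * k * (⟪p, ξ⟫ ^ 2 * ⟪q, ξ⟫ ^ 2)) ∂μ :=
          by congr 1; funext ξ; ring
      _ = 8 * k * P := by
          rw [integral_add (hint _ (by fun_prop)) (hint _ (by fun_prop)), integral_const_mul, h45]
          ring
  have hmean : ∫ ξ, (k * ⟪p, ξ⟫ ^ 2 + ⟪q, ξ⟫ ^ 2) ∂μ = 2 * k / n := by
    rw [integral_add (hint _ (by fun_prop)) (hint _ (by fun_prop)), integral_const_mul,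
      integral_inner_sq hμ hrot, integral_inner_sq hμ hrot, hp]
    ring
  have hJ := sq_integral_le_integral_sq (memLp_of_continuous_of_ae_norm_eq_one hμ
    (f := fun ξ => k * ⟪p, ξ⟫ ^ 2 + ⟪q, ξ⟫ ^ 2) (by fun_prop) 2)
  have hn : 0 < n := Nat.cast_pos.2 (finrank_pos_of_ae_norm_eq_one hμ)
  rw [hmean, hsq, div_pow, div_le_iff₀ (by positivity)] at hJ
  have hP : 0 ≤ P := integral_nonneg fun ξ => by positivity
  rw [div_le_iff₀ (by positivity)]
  nlinarith [sq_nonneg ‖q‖, mul_nonneg hP (sq_nonneg n)]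

theorem div_le_integral_inner_sq_mul_inner_sq_of_norm_eq_one
    [IsProbabilityMeasure μ] (hμ : ∀ᵐ ξ ∂μ, ‖ξ‖ = 1)
    (hrot : ∀ R : E ≃ₗᵢ[ℝ] E, MeasurePreserving R μ μ) {e ν : E} (he : ‖e‖ = 1) (hν : ‖ν‖ = 1) :
    1 / (2 * Module.finrank ℝ E ^ 2) ≤ ∫ ξ, ⟪e, ξ⟫ ^ 2 * ⟪ν, ξ⟫ ^ 2 ∂μ := by
  set n : ℝ := (Module.finrank ℝ E : ℝ)
  have hint : ∀ f : E → ℝ, Continuous f → Integrable f μ :=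
    fun f hf => integrable_of_continuous_of_ae_norm_eq_one hμ hf
  set t := ⟪e, ν⟫
  set w := ν - t • e
  have hνtw : ν = t • e + w := by simp [w]
  have hew : ⟪e, w⟫ = 0 := by
    rw [inner_sub_right, real_inner_smul_right, real_inner_self_eq_norm_sq, he]; ring
  have hw : ‖w‖ ^ 2 = 1 - t ^ 2 := by
    have h := norm_add_sq_real (t • e) w
    rw [← hνtw, hν, real_inner_smul_left, hew, norm_smul, he, Real.norm_eq_abs, mul_one,
      sq_abs] at h
    linarith
  have hexpand : ∀ ξ, ⟪e, ξ⟫ ^ 2 * ⟪ν, ξ⟫ ^ 2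
      = t ^ 2 * ⟪e, ξ⟫ ^ 4 + 2 * t * (⟪e, ξ⟫ ^ 3 * ⟪w, ξ⟫) + ⟪e, ξ⟫ ^ 2 * ⟪w, ξ⟫ ^ 2 := fun ξ => by
    rw [hνtw, inner_add_left, real_inner_smul_left]; ring
  have hcross : ∫ ξ, ⟪e, ξ⟫ ^ 3 * ⟪w, ξ⟫ ∂μ = 0 :=
    integral_comp_inner_mul_inner_eq_zero hrot hew (· ^ 3)
  have hfourth : 1 / n ^ 2 ≤ ∫ ξ, ⟪e, ξ⟫ ^ 4 ∂μ := by
    have h := sq_integral_le_integral_sq (memLp_of_continuous_of_ae_norm_eq_one hμ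
      (f := fun ξ => ⟪e, ξ⟫ ^ 2) (by fun_prop) 2)
    simpa [integral_inner_sq hμ hrot, he, ← pow_mul] using h
  have hmixed := div_le_integral_inner_sq_mul_inner_sq_of_inner_eq_zero hμ hrot he hew
  simp_rw [hexpand]
  rw [integral_add (hint _ (by fun_prop)) (hint _ (by fun_prop)),
    integral_add (hint _ (by fun_prop)) (hint _ (by fun_prop)), integral_const_mul,
    integral_const_mul, hcross, mul_zero, add_zero]
  rw [hw] at hmixed
  calc 1 / (2 * n ^ 2) ≤ t ^ 2 * (1 / n ^ 2) + (1 - t ^ 2) / (2 * n ^ 2) := by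
        have : 0 ≤ t ^ 2 / (2 * n ^ 2) := by positivity
        linarith [show t ^ 2 * (1 / n ^ 2) + (1 - t ^ 2) / (2 * n ^ 2)
          = 1 / (2 * n ^ 2) + t ^ 2 / (2 * n ^ 2) by ring]
    _ ≤ _ := by gcongr

theorem div_le_integral_abs_inner_mul_abs_inner [IsProbabilityMeasure μ]
    (hμ : ∀ᵐ ξ ∂μ, ‖ξ‖ = 1) (hrot : ∀ R : E ≃ₗᵢ[ℝ] E, MeasurePreserving R μ μ)
    {e ν : E} (he : ‖e‖ = 1) (hν : ‖ν‖ = 1) :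
    1 / (2 * Module.finrank ℝ E ^ 2) ≤ ∫ ξ, |⟪e, ξ⟫| * |⟪ν, ξ⟫| ∂μ := by
  refine (div_le_integral_inner_sq_mul_inner_sq_of_norm_eq_one hμ hrot he hν).trans <|
    integral_mono_ae (integrable_of_continuous_of_ae_norm_eq_one hμ (by fun_prop))
      (integrable_of_continuous_of_ae_norm_eq_one hμ (by fun_prop)) (hμ.mono fun ξ hξ => ?_)
  have h1 : |⟪e, ξ⟫| * |⟪ν, ξ⟫| ≤ 1 :=
    mul_le_one₀ ((abs_real_inner_le_norm_of_norm_eq_one hξ).trans_eq he) (abs_nonneg _)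
      ((abs_real_inner_le_norm_of_norm_eq_one hξ).trans_eq hν)
  calc ⟪e, ξ⟫ ^ 2 * ⟪ν, ξ⟫ ^ 2 = (|⟪e, ξ⟫| * |⟪ν, ξ⟫|) ^ 2 := by rw [mul_pow, sq_abs, sq_abs]
    _ ≤ |⟪e, ξ⟫| * |⟪ν, ξ⟫| := pow_le_of_le_one (by positivity) h1 two_ne_zero

theorem div_le_integral_min_abs_inner_mul_abs_inner [IsProbabilityMeasure μ]
    (hμ : ∀ᵐ ξ ∂μ, ‖ξ‖ = 1) (hrot : ∀ R : E ≃ₗᵢ[ℝ] E, MeasurePreserving R μ μ)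
    (v : E) {ν : E} (hν : ‖ν‖ = 1) :
    min ‖v‖ 1 / (2 * Module.finrank ℝ E ^ 2) ≤ ∫ ξ, min |⟪v, ξ⟫| 1 * |⟪ν, ξ⟫| ∂μ := by
  rcases eq_or_ne v 0 with rfl | hv
  · simp
  have hve : ∀ ξ, |⟪v, ξ⟫| = ‖v‖ * |⟪normalize v, ξ⟫| := fun ξ => by
    conv_lhs => rw [← norm_smul_normalize v]
    rw [real_inner_smul_left, abs_mul, abs_norm]
  calc min ‖v‖ 1 / (2 * Module.finrank ℝ E ^ 2)
      = min ‖v‖ 1 * (1 / (2 * Module.finrank ℝ E ^ 2)) := by ring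
    _ ≤ min ‖v‖ 1 * ∫ ξ, |⟪normalize v, ξ⟫| * |⟪ν, ξ⟫| ∂μ := by
      gcongr
      exact div_le_integral_abs_inner_mul_abs_inner hμ hrot (norm_normalize hv) hν
    _ = ∫ ξ, min ‖v‖ 1 * |⟪normalize v, ξ⟫| * |⟪ν, ξ⟫| ∂μ := by
      rw [← integral_const_mul]
      simp_rw [mul_assoc]
    _ ≤ _ := integral_mono_ae (integrable_of_continuous_of_ae_norm_eq_one hμ (by fun_prop))
      (integrable_of_continuous_of_ae_norm_eq_one hμ (by fun_prop)) (hμ.mono fun ξ hξ => ?_)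
  gcongr ?_ * _
  rw [min_mul_of_nonneg _ _ (abs_nonneg _), one_mul, hve]
  exact min_le_min le_rfl
    ((abs_real_inner_le_norm_of_norm_eq_one hξ).trans_eq (norm_normalize hv))

theorem integral_min_abs_inner_mul_abs_inner_le [IsProbabilityMeasure μ]
    (hμ : ∀ᵐ ξ ∂μ, ‖ξ‖ = 1) (v : E) {ν : E} (hν : ‖ν‖ = 1) :
    ∫ ξ, min |⟪v, ξ⟫| 1 * |⟪ν, ξ⟫| ∂μ ≤ min ‖v‖ 1 := by
  refine (integral_mono_ae (integrable_of_continuous_of_ae_norm_eq_one hμ (by fun_prop))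
    (integrable_const (min ‖v‖ 1)) (hμ.mono fun ξ hξ => ?_)).trans_eq (by simp)
  calc min |⟪v, ξ⟫| 1 * |⟪ν, ξ⟫| ≤ min |⟪v, ξ⟫| 1 * 1 := by
        gcongr
        exact (abs_real_inner_le_norm_of_norm_eq_one hξ).trans_eq hν
    _ ≤ min ‖v‖ 1 := by
        rw [mul_one]
        exact min_le_min_right 1 (abs_real_inner_le_norm_of_norm_eq_one hξ)

end RotationInvariant

theorem measurePreserving_cond_hausdorffMeasure_sphere {F : Type*} [NormedAddCommGroup F]
    [NormedSpace ℝ F] [MeasurableSpace F] [BorelSpace F] (d : ℝ) (R : F ≃ₗᵢ[ℝ] F) :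
    MeasurePreserving R (μH[d][|sphere 0 1]) (μH[d][|sphere 0 1]) := by
  have h := (R.toIsometryEquiv.measurePreserving_hausdorffMeasure d).restrict_preimage
    (s := sphere 0 1) isClosed_sphere.measurableSet
  have hpre : R.toIsometryEquiv ⁻¹' sphere 0 1 = sphere 0 1 := by ext; simp
  rw [hpre] at h
  exact h.smul_measure _

theorem hausdorffMeasure_sphere_pos (m : ℕ) :
    0 < (μH[m] : Measure (EuclideanSpace ℝ (Fin (m + 1)))) (sphere 0 1) := by
  set π : EuclideanSpace ℝ (Fin (m + 1)) → EuclideanSpace ℝ (Fin m) :=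
    fun ξ => WithLp.toLp 2 fun k => ξ k.succ
  have hπ : LipschitzWith 1 π := LipschitzWith.of_dist_le_mul fun ξ η => by
    rw [EuclideanSpace.dist_eq, EuclideanSpace.dist_eq, Fin.sum_univ_succ, NNReal.coe_one, one_mul]
    exact Real.sqrt_le_sqrt (le_add_of_nonneg_left (sq_nonneg _))
  have hball : ball (0 : EuclideanSpace ℝ (Fin m)) 1 ⊆ π '' sphere 0 1 := by
    intro y hy
    have hy1 : ‖y‖ ^ 2 ≤ 1 := by
      rw [mem_ball_zero_iff] at hy; nlinarith [norm_nonneg y]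
    refine ⟨WithLp.toLp 2 (Fin.cons √(1 - ‖y‖ ^ 2) y.ofLp), ?_, rfl⟩
    rw [mem_sphere_zero_iff_norm, ← pow_eq_one_iff_of_nonneg (norm_nonneg _) two_ne_zero,
      EuclideanSpace.real_norm_sq_eq, Fin.sum_univ_succ]
    simp only [Fin.cons_zero, Real.sq_sqrt (sub_nonneg.2 hy1), Fin.cons_succ]
    rw [← EuclideanSpace.real_norm_sq_eq]; ring
  calc 0 < (μH[m] : Measure (EuclideanSpace ℝ (Fin m))) (ball 0 1) := measure_ball_pos _ _ one_pos
    _ ≤ μH[m] (π '' sphere 0 1) := measure_mono hball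
    _ ≤ μH[m] (sphere (0 : EuclideanSpace ℝ (Fin (m + 1))) 1) := by
      simpa using hπ.hausdorffMeasure_image_le (Nat.cast_nonneg m) (sphere 0 1)

section CubeFaces

variable {m : ℕ}

def cubeFace (i : Fin (m + 1)) (y : EuclideanSpace ℝ (Fin m)) : EuclideanSpace ℝ (Fin (m + 1)) :=
  WithLp.toLp 2 (Fin.insertNth i 1 y.ofLp)

theorem isometry_cubeFace (i : Fin (m + 1)) : Isometry (cubeFace i) :=
  Isometry.of_dist_eq fun y z => by
    simp [cubeFace, EuclideanSpace.dist_eq, Fin.sum_univ_succAbove _ i]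

theorem one_le_norm_cubeFace (i : Fin (m + 1)) (y : EuclideanSpace ℝ (Fin m)) :
    1 ≤ ‖cubeFace i y‖ := by
  simpa [cubeFace] using PiLp.norm_apply_le (cubeFace i y) i

theorem sphere_subset_iUnion_smul_normalize_cubeFace :
    sphere (0 : EuclideanSpace ℝ (Fin (m + 1))) 1 ⊆
      ⋃ p : Fin (m + 1) × SignType, (fun y => (p.2 : ℝ) • normalize (cubeFace p.1 y)) ''
        (EuclideanSpace.equiv (Fin m) ℝ ⁻¹' Set.univ.pi fun _ => Set.Icc (-1) 1) := by
  intro ξ hξ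
  obtain ⟨i, hi⟩ := Finite.exists_max fun j => |ξ j|
  have hr : ξ i ≠ 0 := by
    intro h0
    have : ξ = 0 := by
      ext j
      simpa [h0] using hi j
    simp [this] at hξ
  set y : EuclideanSpace ℝ (Fin m) := WithLp.toLp 2 fun k => ξ (i.succAbove k) / ξ i
  have hy : ∀ k, y k ∈ Set.Icc (-1) 1 := fun k => abs_le.1 <| by
    simpa [y, abs_div, div_le_one (abs_pos.2 hr)] using hi _
  have hfy : cubeFace i y = (ξ i)⁻¹ • ξ := by
    ext j
    refine Fin.succAboveCases i ?_ (fun k => ?_) j <;> simp [cubeFace, y, hr, div_eq_inv_mul]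
  refine Set.mem_iUnion.2 ⟨(i, SignType.sign (ξ i)), y, fun k _ => hy k, ?_⟩
  simp only [hfy, normalize_smul, smul_smul,
    normalize_eq_self_of_norm_eq_one (mem_sphere_zero_iff_norm.1 hξ)]
  rcases hr.lt_or_gt with h | h <;> simp [h]

end CubeFaces

theorem hausdorffMeasure_sphere_lt_top (m : ℕ) :
    (μH[m] : Measure (EuclideanSpace ℝ (Fin (m + 1)))) (sphere 0 1) < ⊤ := by
  set K : Set (EuclideanSpace ℝ (Fin m)) :=
    EuclideanSpace.equiv (Fin m) ℝ ⁻¹' Set.univ.pi fun _ => Set.Icc (-1) 1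
  have hK : (μH[m] : Measure (EuclideanSpace ℝ (Fin m))) K < ⊤ :=
    ((EuclideanSpace.equiv (Fin m) ℝ).toHomeomorph.isCompact_preimage.2
      (isCompact_univ_pi fun _ => isCompact_Icc)).measure_lt_top
  have hLip (i : Fin (m + 1)) (s : SignType) :
      LipschitzOnWith (‖(s : ℝ)‖₊ * 2) (fun y => (s : ℝ) • normalize (cubeFace i y)) K := by
    have h := lipschitzOnWith_normalize.comp ((isometry_cubeFace i).lipschitz.lipschitzOnWith
      (s := K)) fun y _ => one_le_norm_cubeFace i y
    rw [mul_one] at h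
    exact (lipschitzWith_smul (s : ℝ)).comp_lipschitzOnWith h
  refine (measure_mono sphere_subset_iUnion_smul_normalize_cubeFace).trans_lt <|
    (measure_iUnion_fintype_le _ _).trans_lt <| ENNReal.sum_lt_top.2 fun p _ => ?_
  exact ((hLip p.1 p.2).hausdorffMeasure_image_le (Nat.cast_nonneg m)).trans_lt
    (ENNReal.mul_lt_top (ENNReal.rpow_lt_top_of_nonneg (Nat.cast_nonneg m) ENNReal.coe_ne_top) hK)

/-- The two-sided dimensional estimate used in the proof of Theorem 3.1: there exist
`0 < c ≤ C` such that for every `v ∈ ℝⁿ` and unit vector `ν`,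
`c·min(|v|,1) ≤ ∫_{S^{n-1}} min(|v·ξ|,1)|ν·ξ| dH^{n-1}(ξ) ≤ C·min(|v|,1)`. -/
theorem stmt12 (n : ℕ) (hn : 0 < n) :
    ∃ c C : ℝ, 0 < c ∧ c ≤ C ∧
      ∀ v ν : EuclideanSpace ℝ (Fin n), ‖ν‖ = 1 →
        c * min ‖v‖ 1 ≤ (∫ ξ in Metric.sphere (0 : EuclideanSpace ℝ (Fin n)) 1,
            min |(inner ℝ v ξ : ℝ)| 1 * |(inner ℝ ν ξ : ℝ)| ∂(μH[(n : ℝ) - 1])) ∧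
        (∫ ξ in Metric.sphere (0 : EuclideanSpace ℝ (Fin n)) 1,
            min |(inner ℝ v ξ : ℝ)| 1 * |(inner ℝ ν ξ : ℝ)| ∂(μH[(n : ℝ) - 1]))
          ≤ C * min ‖v‖ 1 := by
  obtain ⟨m, rfl⟩ := Nat.exists_eq_add_one_of_ne_zero hn.ne'
  set S := Metric.sphere (0 : EuclideanSpace ℝ (Fin (m + 1))) 1
  have hpos := hausdorffMeasure_sphere_pos m
  have hfin := hausdorffMeasure_sphere_lt_top m
  have : IsProbabilityMeasure (μH[m][|S]) := cond_isProbabilityMeasure_of_finite hpos.ne' hfin.ne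
  have hS : ∀ᵐ ξ ∂(μH[m][|S]), ‖ξ‖ = 1 :=
    ae_cond_of_forall_mem isClosed_sphere.measurableSet fun _ => mem_sphere_zero_iff_norm.1
  set M := ((μH[m] : Measure (EuclideanSpace ℝ (Fin (m + 1)))) S).toReal
  have hM : 0 < M := ENNReal.toReal_pos hpos.ne' hfin.ne
  have hcond : ∀ f : EuclideanSpace ℝ (Fin (m + 1)) → ℝ,
      ∫ ξ in S, f ξ ∂μH[m] = M * ∫ ξ, f ξ ∂(μH[m][|S]) := fun f => by
    rw [ProbabilityTheory.cond, integral_smul_measure, ENNReal.toReal_inv, smul_eq_mul,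
      ← mul_assoc, mul_inv_cancel₀ hM.ne', one_mul]
  have hexp : ((m + 1 : ℕ) : ℝ) - 1 = m := by push_cast; ring
  refine ⟨M / (2 * (m + 1 : ℕ) ^ 2), M, by positivity,
    div_le_self hM.le (by norm_cast; nlinarith), fun v ν hν => ?_⟩
  have hlow := div_le_integral_min_abs_inner_mul_abs_inner hS
    (measurePreserving_cond_hausdorffMeasure_sphere m) v hν
  rw [finrank_euclideanSpace_fin] at hlow
  rw [hexp, hcond]
  exact ⟨by rw [div_mul_eq_mul_div, mul_div_assoc]; gcongr,
    by gcongr; exact integral_min_abs_inner_mul_abs_inner_le hS v hν⟩
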